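/- Let $S$ be a set of $n$ points in the plane and $L$ a line containing exactly $\ell$ points of $S$; set $x = n - \ell$. Then the number of unit-area triangles of $S$ with exactly two vertices on $L$ is at most $\ell x$, and the number with exactly one vertex on $L$ is at most $x^2 + \ell x$. -/

import Mathlib

/-- Twice the signed area: the determinant of two planar vectors. -/
def det2 (u v : Fin 2 → ℝ) : ℝ := u 0 * v 1 - u 1 * v 0

/-- `T` is a unit-area triangle with vertices in the plane. -/
def IsUnitTriangle (T : Set (Fin 2 → ℝ)) : Prop :=
  ∃ a b c : Fin 2 → ℝ, a ≠ b ∧ a ≠ c ∧ b ≠ c ∧ T = {a, b, c} ∧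
    |det2 (b - a) (c - a)| / 2 = 1

/-!
Write `L = {z | det2 d (z - p) = 0}` with `d = q - p`. If a unit triangle has a side parallel
to `L`, say with endpoints `b` and `b + t • d`, and opposite vertex `a`, then its area is
`|t| |det2 d (a - b)| / 2`, so `|t|` is forced: the triangle is determined by `a` and the endpoint
of that side that comes first along `d`. A triangle with two vertices on `L` is of this kind,
with `a ∉ L` and `b ∈ L`, giving at most `x ℓ` of them. A triangle with exactly one vertex
`u ∈ L` is either of this kind, with `a = u` and `b ∉ L` (at most `ℓ x`), or its other two
vertices `v, w` span a line transversal to `L`; then, after ordering `v, w` so that the signed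
area is positive, `u` is the unique point of `L` with signed area `1` over the base `(v, w)`
(at most `x²`).
-/

lemma det2_eq_zero_iff {u : Fin 2 → ℝ} (hu : u ≠ 0) {v : Fin 2 → ℝ} :
    det2 u v = 0 ↔ ∃ t : ℝ, t • u = v := by
  refine ⟨fun h => ?_, ?_⟩
  · have hu' : u 0 ≠ 0 ∨ u 1 ≠ 0 := by
      by_contra! hc
      exact hu (funext fun i => by fin_cases i <;> simp [hc.1, hc.2])
    rcases hu' with h0 | h1
    · refine ⟨v 0 / u 0, funext fun i => ?_⟩
      fin_cases i
      · simp [h0]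
      · simp [det2] at h ⊢
        field_simp
        linarith
    · refine ⟨v 1 / u 1, funext fun i => ?_⟩
      fin_cases i
      · simp [det2] at h ⊢
        field_simp
        linarith
      · simp [h1]
  · rintro ⟨t, rfl⟩
    simp only [det2, Pi.smul_apply, smul_eq_mul]
    ring

lemma collinear_iff_det2_eq_zero {p q z : Fin 2 → ℝ} (hpq : p ≠ q) :
    Collinear ℝ ({p, q, z} : Set (Fin 2 → ℝ)) ↔ det2 (q - p) (z - p) = 0 := by
  rw [det2_eq_zero_iff (sub_ne_zero_of_ne hpq.symm)]
  constructor
  · intro h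
    have hz := h.mem_affineSpan_of_mem_of_ne (p₃ := z) (by simp) (by simp) (by simp) hpq
    rwa [← vsub_vadd z p, vadd_left_mem_affineSpan_pair] at hz
  · intro h
    have hz : z ∈ line[ℝ, p, q] := by
      rwa [← vsub_vadd z p, vadd_left_mem_affineSpan_pair]
    have := collinear_insert_of_mem_affineSpan_pair hz
    rwa [Set.insert_comm, Set.pair_comm] at this

def lineThrough (p d : Fin 2 → ℝ) : Set (Fin 2 → ℝ) := {z | det2 d (z - p) = 0}

lemma eq_add_smul_or_eq_add_smul {E : Type*} [AddCommGroup E] [Module ℝ E] {x y d : E}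
    {t r : ℝ} (h : y - x = t • d) (ht : |t| = r) : y = x + r • d ∨ x = y + r • d := by
  rcases abs_choice t with h' | h'
  · left
    rw [← ht, h', ← h]
    abel
  · right
    rw [← ht, h', neg_smul, ← h]
    abel

lemma IsUnitTriangle.ncard_eq_three {T : Set (Fin 2 → ℝ)} (hT : IsUnitTriangle T) :
    T.ncard = 3 := by
  obtain ⟨a, b, c, hab, hac, hbc, rfl, -⟩ := hT
  exact Set.ncard_eq_three.2 ⟨a, b, c, hab, hac, hbc, rfl⟩

lemma IsUnitTriangle.abs_det2_eq_two {T : Set (Fin 2 → ℝ)} (hT : IsUnitTriangle T)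
    {u v w : Fin 2 → ℝ} (huv : u ≠ v) (huw : u ≠ w) (hvw : v ≠ w) (hTuvw : T = {u, v, w}) :
    |det2 (v - u) (w - u)| = 2 := by
  obtain ⟨a, b, c, -, -, -, rfl, harea⟩ := hT
  replace harea : |det2 (b - a) (c - a)| = 2 := by linarith
  have hu : u ∈ ({a, b, c} : Set _) := by simp [hTuvw]
  have hv : v ∈ ({a, b, c} : Set _) := by simp [hTuvw]
  have hw : w ∈ ({a, b, c} : Set _) := by simp [hTuvw]
  simp only [Set.mem_insert_iff, Set.mem_singleton_iff] at hu hv hw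
  -- `(u, v, w)` is a permutation of `(a, b, c)`, which changes `det2 (b - a) (c - a)` by a sign
  rcases hu with rfl | rfl | rfl <;> rcases hv with rfl | rfl | rfl <;>
    rcases hw with rfl | rfl | rfl <;> first
    | contradiction
    | assumption
    | rw [← harea, abs_eq_abs]
      simp only [det2, Pi.sub_apply]
      first | (left; ring1) | (right; ring1)

lemma exists_eq_triple_of_ncard_inter_eq_two {α : Type*} {T L : Set α} (hT : T.ncard = 3)
    (hTL : (T ∩ L).ncard = 2) :
    ∃ u v w, u ≠ v ∧ u ∈ L ∧ v ∈ L ∧ w ∉ L ∧ T = {w, u, v} := by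
  have hfin : T.Finite := Set.finite_of_ncard_pos (by omega)
  obtain ⟨u, v, huv, hon⟩ := Set.ncard_eq_two.1 hTL
  have : (T \ L).ncard = 1 := by
    have := Set.ncard_inter_add_ncard_sdiff_eq_ncard T L hfin
    omega
  obtain ⟨w, hoff⟩ := Set.ncard_eq_one.1 this
  refine ⟨u, v, w, huv, ((Set.ext_iff.1 hon u).2 (by simp)).2,
    ((Set.ext_iff.1 hon v).2 (by simp)).2, ((Set.ext_iff.1 hoff w).2 rfl).2, ?_⟩
  rw [← Set.inter_union_sdiff T L, hon, hoff, Set.union_singleton]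

lemma exists_eq_triple_of_ncard_inter_eq_one {α : Type*} {T L : Set α} (hT : T.ncard = 3)
    (hTL : (T ∩ L).ncard = 1) :
    ∃ u v w, v ≠ w ∧ u ∈ L ∧ v ∉ L ∧ w ∉ L ∧ T = {u, v, w} := by
  have hfin : T.Finite := Set.finite_of_ncard_pos (by omega)
  obtain ⟨u, hon⟩ := Set.ncard_eq_one.1 hTL
  have : (T \ L).ncard = 2 := by
    have := Set.ncard_inter_add_ncard_sdiff_eq_ncard T L hfin
    omega
  obtain ⟨v, w, hvw, hoff⟩ := Set.ncard_eq_two.1 this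
  refine ⟨u, v, w, hvw, ((Set.ext_iff.1 hon u).2 rfl).2,
    ((Set.ext_iff.1 hoff v).2 (by simp)).2, ((Set.ext_iff.1 hoff w).2 (by simp)).2, ?_⟩
  rw [← Set.inter_union_sdiff T L, hon, hoff, Set.singleton_union]

noncomputable def parallelBaseTriangle (d a b : Fin 2 → ℝ) : Set (Fin 2 → ℝ) :=
  {a, b, b + (2 / |det2 d (a - b)|) • d}

lemma triple_eq_parallelBaseTriangle {d a b c : Fin 2 → ℝ} (hd : d ≠ 0)
    (hbc : det2 d (c - b) = 0) (harea : |det2 (b - a) (c - a)| = 2) :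
    {a, b, c} = parallelBaseTriangle d a b ∨ {a, b, c} = parallelBaseTriangle d a c := by
  obtain ⟨t, ht⟩ := (det2_eq_zero_iff hd).1 hbc
  have hdet : det2 (b - a) (c - a) = t * det2 d (a - b) := by
    rw [show c - a = (c - b) + (b - a) by abel, ← ht]
    simp only [det2, Pi.add_apply, Pi.sub_apply, Pi.smul_apply, smul_eq_mul]
    ring
  have hheight : det2 d (a - c) = det2 d (a - b) := by
    rw [show a - c = (a - b) - (c - b) by abel, ← ht]
    simp only [det2, Pi.sub_apply, Pi.smul_apply, smul_eq_mul]
    ring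
  have hab : det2 d (a - b) ≠ 0 := by
    rintro h
    rw [hdet, h, mul_zero, abs_zero] at harea
    norm_num at harea
  have ht_abs : |t| = 2 / |det2 d (a - b)| := by
    rw [eq_div_iff (abs_ne_zero.2 hab), ← abs_mul, ← hdet, harea]
  rcases eq_add_smul_or_eq_add_smul ht.symm ht_abs with h | h
  · left
    rw [parallelBaseTriangle, ← h]
  · right
    rw [parallelBaseTriangle, hheight, ← h, Set.pair_comm]

/-- The point `z` of the line `p + ℝ • d` with `det2 (w - v) (z - v) = 2`. -/
noncomputable def apexOnLine (p d v w : Fin 2 → ℝ) : Fin 2 → ℝ :=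
  p + ((2 - det2 (w - v) (p - v)) / det2 (w - v) d) • d

lemma apexOnLine_eq {p d u v w : Fin 2 → ℝ} {s : ℝ} (hu : s • d = u - p)
    (hvw : det2 (w - v) d ≠ 0) (harea : det2 (w - v) (u - v) = 2) :
    apexOnLine p d v w = u := by
  have hexp : det2 (w - v) (u - v) = det2 (w - v) (p - v) + s * det2 (w - v) d := by
    rw [show u - v = (p - v) + s • d by rw [hu]; abel]
    simp only [det2, Pi.add_apply, Pi.sub_apply, Pi.smul_apply, smul_eq_mul]
    ring
  have hs : (2 - det2 (w - v) (p - v)) / det2 (w - v) d = s := by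
    rw [div_eq_iff hvw]
    linarith
  rw [apexOnLine, hs, hu]
  abel

noncomputable def transversalBaseTriangle (p d v w : Fin 2 → ℝ) : Set (Fin 2 → ℝ) :=
  {apexOnLine p d v w, v, w}

lemma triple_eq_transversalBaseTriangle {p d u v w : Fin 2 → ℝ} (hd : d ≠ 0)
    (hu : det2 d (u - p) = 0) (hvw : det2 d (w - v) ≠ 0) (harea : |det2 (v - u) (w - u)| = 2) :
    {u, v, w} = transversalBaseTriangle p d v w ∨
      {u, v, w} = transversalBaseTriangle p d w v := by
  obtain ⟨s, hs⟩ := (det2_eq_zero_iff hd).1 hu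
  have hvw' : det2 (w - v) d ≠ 0 := by
    contrapose! hvw
    simp only [det2, Pi.sub_apply] at hvw ⊢
    linarith
  have hwv' : det2 (v - w) d ≠ 0 := by
    contrapose! hvw
    simp only [det2, Pi.sub_apply] at hvw ⊢
    linarith
  rcases (abs_eq (by norm_num : (0 : ℝ) ≤ 2)).1 harea with h | h
  · left
    have harea' : det2 (w - v) (u - v) = 2 := by
      rw [← h]
      simp only [det2, Pi.sub_apply]
      ring
    rw [transversalBaseTriangle, apexOnLine_eq hs hvw' harea']
  · right
    have harea' : det2 (v - w) (u - w) = 2 := by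
      rw [← neg_neg (2 : ℝ), ← h]
      simp only [det2, Pi.sub_apply]
      ring
    rw [transversalBaseTriangle, apexOnLine_eq hs hwv' harea', Set.pair_comm]

lemma setOf_two_on_line_subset_image {p d : Fin 2 → ℝ} (hd : d ≠ 0) (S : Set (Fin 2 → ℝ)) :
    {T | T ⊆ S ∧ IsUnitTriangle T ∧ (T ∩ lineThrough p d).ncard = 2} ⊆
      (fun x => parallelBaseTriangle d x.1 x.2) ''
        ((S \ lineThrough p d) ×ˢ (S ∩ lineThrough p d)) := by
  rintro T ⟨hTS, hT, hTL⟩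
  obtain ⟨u, v, w, huv, hu, hv, hw, rfl⟩ :=
    exists_eq_triple_of_ncard_inter_eq_two hT.ncard_eq_three hTL
  have harea := hT.abs_det2_eq_two (ne_of_mem_of_not_mem hu hw).symm
    (ne_of_mem_of_not_mem hv hw).symm huv rfl
  have huv_par : det2 d (v - u) = 0 := by
    have hu : det2 d (u - p) = 0 := hu
    have hv : det2 d (v - p) = 0 := hv
    simp only [det2, Pi.sub_apply] at hu hv ⊢
    linarith
  have hwS : w ∈ S := hTS (by simp)
  rcases triple_eq_parallelBaseTriangle hd huv_par harea with h | h
  · exact ⟨(w, u), ⟨⟨hwS, hw⟩, hTS (by simp), hu⟩, h.symm⟩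
  · exact ⟨(w, v), ⟨⟨hwS, hw⟩, hTS (by simp), hv⟩, h.symm⟩

lemma setOf_one_on_line_subset_union_image {p d : Fin 2 → ℝ} (hd : d ≠ 0)
    (S : Set (Fin 2 → ℝ)) :
    {T | T ⊆ S ∧ IsUnitTriangle T ∧ (T ∩ lineThrough p d).ncard = 1} ⊆
      (fun x => parallelBaseTriangle d x.1 x.2) ''
          ((S ∩ lineThrough p d) ×ˢ (S \ lineThrough p d)) ∪
        (fun x => transversalBaseTriangle p d x.1 x.2) ''
          ((S \ lineThrough p d) ×ˢ (S \ lineThrough p d)) := by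
  rintro T ⟨hTS, hT, hTL⟩
  obtain ⟨u, v, w, hvw, hu, hv, hw, rfl⟩ :=
    exists_eq_triple_of_ncard_inter_eq_one hT.ncard_eq_three hTL
  have harea := hT.abs_det2_eq_two (ne_of_mem_of_not_mem hu hv)
    (ne_of_mem_of_not_mem hu hw) hvw rfl
  have huS : u ∈ S := hTS (by simp)
  have hvS : v ∈ S := hTS (by simp)
  have hwS : w ∈ S := hTS (by simp)
  by_cases hpar : det2 d (w - v) = 0
  · left
    rcases triple_eq_parallelBaseTriangle hd hpar harea with h | h
    · exact ⟨(u, v), ⟨⟨huS, hu⟩, hvS, hv⟩, h.symm⟩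
    · exact ⟨(u, w), ⟨⟨huS, hu⟩, hwS, hw⟩, h.symm⟩
  · right
    rcases triple_eq_transversalBaseTriangle hd hu hpar harea with h | h
    · exact ⟨(v, w), ⟨⟨hvS, hv⟩, hwS, hw⟩, h.symm⟩
    · exact ⟨(w, v), ⟨⟨hwS, hw⟩, hvS, hv⟩, h.symm⟩

lemma ncard_two_on_line_le {p d : Fin 2 → ℝ} (hd : d ≠ 0) {S : Set (Fin 2 → ℝ)}
    (hS : S.Finite) :
    {T | T ⊆ S ∧ IsUnitTriangle T ∧ (T ∩ lineThrough p d).ncard = 2}.ncard ≤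
      (S \ lineThrough p d).ncard * (S ∩ lineThrough p d).ncard := by
  have hon : (S ∩ lineThrough p d).Finite := hS.inter_of_left _
  have hoff : (S \ lineThrough p d).Finite := hS.sdiff
  have hfin := hoff.prod hon
  calc _ ≤ _ := Set.ncard_le_ncard (setOf_two_on_line_subset_image hd S) (hfin.image _)
    _ ≤ _ := Set.ncard_image_le hfin
    _ = _ := Set.ncard_prod

lemma ncard_one_on_line_le {p d : Fin 2 → ℝ} (hd : d ≠ 0) {S : Set (Fin 2 → ℝ)}
    (hS : S.Finite) :
    {T | T ⊆ S ∧ IsUnitTriangle T ∧ (T ∩ lineThrough p d).ncard = 1}.ncard ≤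
      (S ∩ lineThrough p d).ncard * (S \ lineThrough p d).ncard +
        (S \ lineThrough p d).ncard * (S \ lineThrough p d).ncard := by
  have hon : (S ∩ lineThrough p d).Finite := hS.inter_of_left _
  have hoff : (S \ lineThrough p d).Finite := hS.sdiff
  have hfin₁ := hon.prod hoff
  have hfin₂ := hoff.prod hoff
  calc _ ≤ _ := Set.ncard_le_ncard (setOf_one_on_line_subset_union_image hd S)
          ((hfin₁.image _).union (hfin₂.image _))
    _ ≤ _ := Set.ncard_union_le _ _
    _ ≤ _ := add_le_add (Set.ncard_image_le hfin₁) (Set.ncard_image_le hfin₂)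
    _ = _ := by rw [Set.ncard_prod, Set.ncard_prod]

/-- if a line `L` contains exactly `ℓ` points of an `n`-point
planar set `S` and `x = n - ℓ`, then at most `ℓ·x` unit-area triangles of `S`
have exactly two vertices on `L`, and at most `x² + ℓ·x` have exactly one
vertex on `L`. -/
theorem stmt6 (S : Set (Fin 2 → ℝ)) (hS : S.Finite) (n : ℕ) (hn : S.ncard = n)
    (p q : Fin 2 → ℝ) (hpq : p ≠ q)
    (L : Set (Fin 2 → ℝ)) (hL : L = {x | Collinear ℝ {p, q, x}})
    (ℓ x : ℕ) (hl : (S ∩ L).ncard = ℓ) (hx : x = n - ℓ) :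
    {T : Set (Fin 2 → ℝ) | T ⊆ S ∧ IsUnitTriangle T ∧ (T ∩ L).ncard = 2}.ncard
      ≤ ℓ * x ∧
    {T : Set (Fin 2 → ℝ) | T ⊆ S ∧ IsUnitTriangle T ∧ (T ∩ L).ncard = 1}.ncard
      ≤ x ^ 2 + ℓ * x := by
  obtain rfl : L = lineThrough p (q - p) :=
    hL.trans (Set.ext fun _ => collinear_iff_det2_eq_zero hpq)
  have hd : q - p ≠ 0 := sub_ne_zero_of_ne hpq.symm
  have hoff : (S \ lineThrough p (q - p)).ncard = x := by
    have := Set.ncard_inter_add_ncard_sdiff_eq_ncard S (lineThrough p (q - p)) hS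
    omega
  constructor
  · calc _ ≤ _ := ncard_two_on_line_le hd hS
      _ = ℓ * x := by rw [hl, hoff, mul_comm]
  · calc _ ≤ _ := ncard_one_on_line_le hd hS
      _ = x ^ 2 + ℓ * x := by rw [hl, hoff]; ring
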